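/- The polynomial X^4 + X^3 - 1 has no root on the unit circle in ℂ: there is no complex number h with |h| = 1 satisfying h^4 + h^3 - 1 = 0. -/

import Mathlib

/-- The polynomial `X^4 + X^3 - 1` has no root on the unit circle in `ℂ`. -/
theorem no_unitary_root_X4_add_X3_sub_one :
    ¬ ∃ h : ℂ, ‖h‖ = 1 ∧ h ^ 4 + h ^ 3 - 1 = 0 := by
  rintro ⟨h, habs, heq⟩
  have h1 : h ^ 3 * (h + 1) = 1 := by linear_combination heq
  have habs1 : ‖h + 1‖ = 1 := by
    have := congrArg (‖·‖) h1
    simp [map_mul, map_pow, habs] at this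
    exact this
  have hn : Complex.normSq h = 1 := by
    rw [← Complex.sq_norm, habs]; norm_num
  have hn1 : Complex.normSq (h + 1) = 1 := by
    rw [← Complex.sq_norm, habs1]; norm_num
  have hre : h.re = -1/2 := by
    simp [Complex.normSq_apply] at hn hn1
    nlinarith [hn, hn1]
  have him : h.im ^ 2 = 3/4 := by
    simp [Complex.normSq_apply] at hn
    nlinarith [hn]
  have hsq : h ^ 2 + h + 1 = 0 := by
    rw [Complex.ext_iff]
    constructor
    · simp [pow_two, Complex.mul_re, hre]
      nlinarith [him]
    · simp [pow_two, Complex.mul_im, hre]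
      ring_nf
  have hcube : h ^ 3 = 1 := by linear_combination (h - 1) * hsq
  have h0 : h = 0 := by linear_combination heq - (h + 1) * hcube
  rw [h0] at habs
  simp at habs
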